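/- arXiv:1105.5059 — 4 statements merged into one kernel-verified Lean document; each statement's English description precedes it below -/
import Mathlib

section
/- Let m and n be natural numbers and let A be an m × n matrix with integer entries. Define T_A : (ℂ^×)^n → (ℂ^×)^m by (T_A x)_i = ∏_{j=1}^{n} (x_j)^{A_{ij}} (integer powers in the group of units of ℂ). Then T_A is a continuous group homomorphism whose range is a closed subset of (ℂ^×)^m in the product topology. -/
private lemma zpow_sum' {G ι : Type*} [CommGroup G] (x : G) (s : Finset ι) (c : ι → ℤ) :
    x ^ (∑ i ∈ s, c i) = ∏ i ∈ s, x ^ c i := by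
  induction s using Finset.cons_induction with
  | empty => simp
  | cons a s ha ih => simp [zpow_add, ih]

private lemma prod_zpow' {G ι : Type*} [CommGroup G] (f : ι → G) (s : Finset ι) (z : ℤ) :
    (∏ i ∈ s, f i) ^ z = ∏ i ∈ s, f i ^ z := by
  induction s using Finset.cons_induction with
  | empty => simp
  | cons a s ha ih => simp [mul_zpow, ih]

private noncomputable instance : RootableBy ℂˣ ℕ where
  root x n := if hn : n = 0 then 1 else
    Units.mk0 (Classical.choose (IsAlgClosed.exists_pow_nat_eq (x : ℂ) (Nat.pos_of_ne_zero hn)))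
      (by
        intro h
        have := Classical.choose_spec (IsAlgClosed.exists_pow_nat_eq (x : ℂ) (Nat.pos_of_ne_zero hn))
        rw [h, zero_pow hn] at this
        exact x.ne_zero this.symm)
  root_zero x := by simp
  root_cancel {n} x hn := by
    have := Classical.choose_spec (IsAlgClosed.exists_pow_nat_eq (x : ℂ) (Nat.pos_of_ne_zero hn))
    ext
    simp [hn, this]

private noncomputable instance : RootableBy ℂˣ ℤ := Group.rootableByIntOfRootableByNat ℂˣ

private noncomputable instance : DivisibleBy (Additive ℂˣ) ℤ where
  div a n := Additive.ofMul (RootableBy.root a.toMul n)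
  div_zero a := by
    show Additive.ofMul (RootableBy.root a.toMul (0 : ℤ)) = 0
    rw [RootableBy.root_zero]; rfl
  div_cancel {n} a hn := by
    show n • Additive.ofMul (RootableBy.root a.toMul n) = a
    rw [← ofMul_zpow, RootableBy.root_cancel _ hn]
    rfl

/-- Lattice-level content of claim (2.11) of the paper: a monomial map
`T_A : (ℂˣ)ⁿ → (ℂˣ)ᵐ`, `(T_A x)_i = ∏_j (x_j)^(A i j)`, given by an integer matrix `A`,
is a continuous group homomorphism with closed range. -/
theorem stmt4 {m n : ℕ} (A : Matrix (Fin m) (Fin n) ℤ)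
    (T : (Fin n → ℂˣ) → (Fin m → ℂˣ))
    (hT : ∀ (x : Fin n → ℂˣ) (i : Fin m), T x i = ∏ j, (x j) ^ (A i j)) :
    Continuous T ∧ (∀ x y, T (x * y) = T x * T y) ∧ IsClosed (Set.range T) := by
  have hTfun : T = fun x i => ∏ j, (x j) ^ (A i j) := funext fun x => funext (hT x)
  refine ⟨?_, ?_, ?_⟩
  · rw [hTfun]
    exact continuous_pi fun i => continuous_finset_prod _ fun j _ =>
      (continuous_apply j).zpow (A i j)
  · intro x y
    funext i
    simp only [hT, Pi.mul_apply, mul_zpow, Finset.prod_mul_distrib]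
  · -- closed range
    set L : (Fin m → ℤ) →ₗ[ℤ] (Fin n → ℤ) := A.vecMulLinear with hL
    have hLapp : ∀ (v : Fin m → ℤ) (j : Fin n), L v j = ∑ i, v i * A i j := by
      intro v j
      simp [hL, Matrix.vecMulLinear, Matrix.vecMul, dotProduct]
    have key : Set.range T =
        ⋂ v ∈ LinearMap.ker L, {y : Fin m → ℂˣ | ∏ i, (y i) ^ (v i) = 1} := by
      ext y
      simp only [Set.mem_iInter, Set.mem_setOf_eq, Set.mem_range]
      constructor
      · rintro ⟨x, rfl⟩ v hv
        have hv' : ∀ j, ∑ i, v i * A i j = 0 := by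
          intro j
          have := LinearMap.mem_ker.mp hv
          have := congrFun this j
          rwa [hLapp] at this
        calc ∏ i, (T x i) ^ v i = ∏ i, ∏ j, (x j) ^ (A i j * v i) := by
              refine Finset.prod_congr rfl fun i _ => ?_
              rw [hT, prod_zpow']
              exact Finset.prod_congr rfl fun j _ => (zpow_mul _ _ _).symm
          _ = ∏ j, ∏ i, (x j) ^ (A i j * v i) := Finset.prod_comm
          _ = ∏ j, (x j) ^ (∑ i, A i j * v i) := by
              refine Finset.prod_congr rfl fun j _ => (zpow_sum' _ _ _).symm
          _ = 1 := by
              refine Finset.prod_eq_one fun j _ => ?_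
              have : ∑ i, A i j * v i = 0 := by
                rw [← hv' j]; exact Finset.sum_congr rfl fun i _ => mul_comm _ _
              rw [this, zpow_zero]
      · intro hy
        -- build φ : (Fin m → ℤ) →+ Additive ℂˣ
        set φ : (Fin m → ℤ) →+ Additive ℂˣ :=
          { toFun := fun v => Additive.ofMul (∏ i, (y i) ^ (v i))
            map_zero' := by simp
            map_add' := fun v w => by
              show Additive.ofMul _ = Additive.ofMul _ + Additive.ofMul _
              rw [← ofMul_mul, ← Finset.prod_mul_distrib]
              congr 1
              exact Finset.prod_congr rfl fun i _ => by rw [Pi.add_apply, zpow_add] } with hφ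
        have hφapp : ∀ v, φ v = Additive.ofMul (∏ i, (y i) ^ (v i)) := fun v => rfl
        set φₗ : (Fin m → ℤ) →ₗ[ℤ] Additive ℂˣ := φ.toIntLinearMap with hφₗ
        have hker : LinearMap.ker L ≤ LinearMap.ker φₗ := by
          intro v hv
          simp only [LinearMap.mem_ker, hφₗ, AddMonoidHom.coe_toIntLinearMap, hφapp]
          rw [hy v hv]; rfl
        set φ' := Submodule.liftQ (LinearMap.ker L) φₗ hker with hφ'
        set e := L.quotKerEquivRange with he
        set ψ : LinearMap.range L →ₗ[ℤ] Additive ℂˣ := φ' ∘ₗ (e.symm : _ →ₗ[ℤ] _) with hψ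
        obtain ⟨h, hh⟩ := (Module.Baer.of_divisible (Additive ℂˣ)).extension_property
          (LinearMap.range L).subtype Subtype.coe_injective ψ
        have hhL : ∀ v, h (L v) = φₗ v := by
          intro v
          have mem : L v ∈ LinearMap.range L := LinearMap.mem_range_self L v
          have h1 : h (L v) = ψ ⟨L v, mem⟩ := by
            have := congrFun (congrArg DFunLike.coe hh) (⟨L v, mem⟩ : LinearMap.range L)
            simpa using this
          rw [h1, hψ]
          have h2 : e.symm ⟨L v, mem⟩ = Submodule.Quotient.mk v := by
            rw [LinearEquiv.symm_apply_eq]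
            exact Subtype.ext (L.quotKerEquivRange_apply_mk v)
          simp only [LinearMap.comp_apply, LinearEquiv.coe_coe, h2, hφ',
            Submodule.liftQ_apply]
        refine ⟨fun j => Additive.toMul (h (Pi.single j 1)), ?_⟩
        funext i
        rw [hT]
        apply Additive.ofMul.injective
        have lhs : Additive.ofMul (∏ j, (Additive.toMul (h (Pi.single j (1:ℤ)))) ^ (A i j))
            = h (fun j => A i j) := by
          rw [ofMul_prod]
          have : ∀ j, Additive.ofMul ((Additive.toMul (h (Pi.single j (1:ℤ)))) ^ (A i j))
              = A i j • h (Pi.single j (1:ℤ)) := fun j => by rw [ofMul_zpow]; rfl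
          rw [Finset.sum_congr rfl fun j _ => this j]
          have h2 : ∀ j, A i j • h (Pi.single j (1:ℤ)) = h (Pi.single j (A i j)) := by
            intro j
            rw [← map_smul]
            congr 1
            ext j'
            simp [Pi.single_apply, smul_eq_mul]
          rw [Finset.sum_congr rfl fun j _ => h2 j, ← map_sum,
            Finset.univ_sum_single (fun j => A i j)]
        rw [lhs]
        have hrow : (fun j => A i j) = L (Pi.single i 1) := by
          funext j
          rw [hLapp]
          simp [Pi.single_apply]
        rw [hrow, hhL]
        simp only [hφₗ, AddMonoidHom.coe_toIntLinearMap, hφapp]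
        congr 1
        rw [Finset.prod_eq_single i (fun b _ hb => by simp [Pi.single_eq_of_ne hb])
          (fun hi => absurd (Finset.mem_univ i) hi)]
        simp
    rw [key]
    refine isClosed_iInter fun v => isClosed_iInter fun _ => ?_
    have : Continuous fun y : Fin m → ℂˣ => ∏ i, (y i) ^ (v i) :=
      continuous_finset_prod _ fun i _ => (continuous_apply i).zpow (v i)
    exact isClosed_eq this continuous_const
end

section
/- Let E be a normed additive group whose norm is ultrametric (‖x + y‖ ≤ max(‖x‖, ‖y‖) for all x, y), and let G be a group with identity element 1. Let R > 0 and let ψ : E → G be a map with ψ(0) = 1 which is injective on the closed ball B_R = {X ∈ E : ‖X‖ ≤ R}. Assume there are maps m : E × E → E and i : E → E and a radius 0 < R₁ ≤ R such that: (a) for all X, Y ∈ B_{R₁} one has ‖m(X,Y)‖ ≤ R, ψ(m(X,Y)) = ψ(X)·ψ(Y), ‖i(X)‖ ≤ R, and ψ(i(X)) = ψ(X)⁻¹; (b) for every ε > 0 there exists δ > 0 such that for all X, Y with ‖X‖ ≤ δ and ‖Y‖ ≤ δ one has ‖m(X,Y) − X − Y‖ ≤ ε · max(‖X‖, ‖Y‖)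 and ‖i(X) + X‖ ≤ ε · ‖X‖. Then there exists r₀ with 0 < r₀ ≤ R₁ such that for every r with 0 < r ≤ r₀, the image ψ(B_r) of the closed ball B_r = {X : ‖X‖ ≤ r} is a subgroup of G (it contains 1 and is closed under multiplication and inversion). If moreover G is a topological group, ψ restricted to B_R is a homeomorphism onto an open subset of G, and each closed ball B_r is compact and open in E, then ψ(B_r) is a compact open subgroup of G for all 0 < r ≤ r₀. -/
/-! The first-order expansions, applied with `ε = 1`, say that on a small ball the chart
multiplication and inversion move `X + Y` and `-X` by at most `max ‖X‖ ‖Y‖` and `‖X‖`. In an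
ultrametric group such a perturbation never leaves a closed ball around `0`, so the images of
small closed balls are closed under the group operations. The topological part is transport
of compactness and openness along the open embedding `ψ|_{B_R}`. -/

namespace IsUltrametricDist

variable {E : Type*} [SeminormedAddCommGroup E] [IsUltrametricDist E] {r : ℝ}

lemma norm_le_of_norm_sub_le {x y : E} (hy : ‖y‖ ≤ r) (hxy : ‖x - y‖ ≤ r) : ‖x‖ ≤ r := by
  simpa using (norm_add_le_max (x - y) y).trans (max_le hxy hy)

lemma norm_le_of_norm_sub_sub_le_max {X Y Z : E} (hX : ‖X‖ ≤ r) (hY : ‖Y‖ ≤ r)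
    (hZ : ‖Z - X - Y‖ ≤ max ‖X‖ ‖Y‖) : ‖Z‖ ≤ r :=
  norm_le_of_norm_sub_le ((norm_add_le_max X Y).trans (max_le hX hY))
    (by rw [← sub_sub]; exact hZ.trans (max_le hX hY))

lemma norm_le_of_norm_add_le {X Z : E} (hX : ‖X‖ ≤ r) (hZ : ‖Z + X‖ ≤ ‖X‖) : ‖Z‖ ≤ r :=
  norm_le_of_norm_sub_le (y := -X) (by rwa [norm_neg]) (by rw [sub_neg_eq_add]; exact hZ.trans hX)

end IsUltrametricDist

section ChartImage

open IsUltrametricDist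

variable {E G : Type*} [SeminormedAddCommGroup E] [IsUltrametricDist E] [Group G]
  {ψ : E → G} {r : ℝ}

lemma mul_mem_image_closedBall {m : E × E → E}
    (hm : ∀ X Y : E, ‖X‖ ≤ r → ‖Y‖ ≤ r → ψ (m (X, Y)) = ψ X * ψ Y)
    (hm_approx : ∀ X Y : E, ‖X‖ ≤ r → ‖Y‖ ≤ r → ‖m (X, Y) - X - Y‖ ≤ max ‖X‖ ‖Y‖) :
    ∀ a ∈ ψ '' {X : E | ‖X‖ ≤ r}, ∀ b ∈ ψ '' {X : E | ‖X‖ ≤ r},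
      a * b ∈ ψ '' {X : E | ‖X‖ ≤ r} := by
  rintro _ ⟨X, hX, rfl⟩ _ ⟨Y, hY, rfl⟩
  exact ⟨m (X, Y), norm_le_of_norm_sub_sub_le_max hX hY (hm_approx X Y hX hY), hm X Y hX hY⟩

lemma inv_mem_image_closedBall {i : E → E}
    (hi : ∀ X : E, ‖X‖ ≤ r → ψ (i X) = (ψ X)⁻¹)
    (hi_approx : ∀ X : E, ‖X‖ ≤ r → ‖i X + X‖ ≤ ‖X‖) :
    ∀ a ∈ ψ '' {X : E | ‖X‖ ≤ r}, a⁻¹ ∈ ψ '' {X : E | ‖X‖ ≤ r} := by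
  rintro _ ⟨X, hX, rfl⟩
  exact ⟨i X, norm_le_of_norm_add_le hX (hi_approx X hX), hi X hX⟩

end ChartImage

lemma IsOpenMap.isOpen_image_of_domRestrict {X Y : Type*} [TopologicalSpace X]
    [TopologicalSpace Y] {f : X → Y} {s t : Set X} (hf : IsOpenMap (s.domRestrict f))
    (hts : t ⊆ s) (ht : IsOpen t) : IsOpen (f '' t) := by
  simpa [Set.image_domRestrict, Set.inter_eq_left.mpr hts] using
    hf _ (ht.preimage continuous_subtype_val)

theorem stmt5_general {E : Type*} [NormedAddCommGroup E]
    (hultra : ∀ x y : E, ‖x + y‖ ≤ max ‖x‖ ‖y‖)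
    {G : Type*} [Group G] [TopologicalSpace G]
    (R : ℝ) (ψ : E → G) (hψ0 : ψ 0 = 1)
    (m : E × E → E) (i : E → E) (R₁ : ℝ) (hR₁ : 0 < R₁) (hR₁R : R₁ ≤ R)
    (hm : ∀ X Y : E, ‖X‖ ≤ R₁ → ‖Y‖ ≤ R₁ →
      ‖m (X, Y)‖ ≤ R ∧ ψ (m (X, Y)) = ψ X * ψ Y)
    (hi : ∀ X : E, ‖X‖ ≤ R₁ → ‖i X‖ ≤ R ∧ ψ (i X) = (ψ X)⁻¹)
    (happrox : ∀ ε : ℝ, 0 < ε → ∃ δ : ℝ, 0 < δ ∧ ∀ X Y : E, ‖X‖ ≤ δ → ‖Y‖ ≤ δ →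
      ‖m (X, Y) - X - Y‖ ≤ ε * max ‖X‖ ‖Y‖ ∧ ‖i X + X‖ ≤ ε * ‖X‖) :
    ∃ r₀ : ℝ, 0 < r₀ ∧ r₀ ≤ R₁ ∧ ∀ r : ℝ, 0 < r → r ≤ r₀ →
      (((1 : G) ∈ ψ '' {X : E | ‖X‖ ≤ r} ∧
        (∀ a ∈ ψ '' {X : E | ‖X‖ ≤ r}, ∀ b ∈ ψ '' {X : E | ‖X‖ ≤ r},
          a * b ∈ ψ '' {X : E | ‖X‖ ≤ r}) ∧
        (∀ a ∈ ψ '' {X : E | ‖X‖ ≤ r}, a⁻¹ ∈ ψ '' {X : E | ‖X‖ ≤ r})) ∧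
      (Topology.IsOpenEmbedding (Set.restrict {X : E | ‖X‖ ≤ R} ψ) →
       (∀ r' : ℝ, 0 < r' → IsCompact {X : E | ‖X‖ ≤ r'} ∧ IsOpen {X : E | ‖X‖ ≤ r'}) →
       IsCompact (ψ '' {X : E | ‖X‖ ≤ r}) ∧ IsOpen (ψ '' {X : E | ‖X‖ ≤ r}))) := by
  have := IsUltrametricDist.isUltrametricDist_of_forall_norm_add_le_max_norm hultra
  obtain ⟨δ, hδ, hδ_approx⟩ := happrox 1 one_pos
  refine ⟨min δ R₁, lt_min hδ hR₁, min_le_right _ _, fun r hr hr₀ => ?_⟩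
  have hrδ : r ≤ δ := hr₀.trans (min_le_left _ _)
  have hrR₁ : r ≤ R₁ := hr₀.trans (min_le_right _ _)
  refine ⟨⟨⟨0, by simpa using hr.le, hψ0⟩, ?_, ?_⟩, fun hψ hballs => ?_⟩
  · exact mul_mem_image_closedBall (m := m)
      (fun X Y hX hY => (hm X Y (hX.trans hrR₁) (hY.trans hrR₁)).2)
      (fun X Y hX hY => by simpa using (hδ_approx X Y (hX.trans hrδ) (hY.trans hrδ)).1)
  · exact inv_mem_image_closedBall (i := i) (fun X hX => (hi X (hX.trans hrR₁)).2)
      (fun X hX => by simpa using (hδ_approx X X (hX.trans hrδ) (hX.trans hrδ)).2)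
  · have hsub : {X : E | ‖X‖ ≤ r} ⊆ {X : E | ‖X‖ ≤ R} := fun X hX => hX.trans (hrR₁.trans hR₁R)
    exact ⟨(hballs r hr).1.image_of_continuousOn
        ((continuousOn_iff_continuous_domRestrict.mpr hψ.continuous).mono hsub),
      hψ.isOpenMap.isOpen_image_of_domRestrict hsub (hballs r hr).2⟩

/-- Lemma 10.1 (i) of the paper: for a map `ψ` from an ultrametric normed additive group
to a group `G`, sending `0` to `1`, injective on the ball of radius `R`, and carrying a
first-order-compatible multiplication `m` and inversion `i` in the chart, the images of
all sufficiently small closed balls are subgroups of `G`; moreover if `G` is a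
topological group, `ψ` is a homeomorphism of the `R`-ball onto an open subset of `G`,
and the closed balls are compact and open, these images are compact open subgroups. -/
theorem stmt5 {E : Type*} [NormedAddCommGroup E]
    (hultra : ∀ x y : E, ‖x + y‖ ≤ max ‖x‖ ‖y‖)
    {G : Type*} [Group G] [TopologicalSpace G] [IsTopologicalGroup G]
    (R : ℝ) (hR : 0 < R) (ψ : E → G) (hψ0 : ψ 0 = 1)
    (hinj : Set.InjOn ψ {X : E | ‖X‖ ≤ R})
    (m : E × E → E) (i : E → E) (R₁ : ℝ) (hR₁ : 0 < R₁) (hR₁R : R₁ ≤ R)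
    (hm : ∀ X Y : E, ‖X‖ ≤ R₁ → ‖Y‖ ≤ R₁ →
      ‖m (X, Y)‖ ≤ R ∧ ψ (m (X, Y)) = ψ X * ψ Y)
    (hi : ∀ X : E, ‖X‖ ≤ R₁ → ‖i X‖ ≤ R ∧ ψ (i X) = (ψ X)⁻¹)
    (happrox : ∀ ε : ℝ, 0 < ε → ∃ δ : ℝ, 0 < δ ∧ ∀ X Y : E, ‖X‖ ≤ δ → ‖Y‖ ≤ δ →
      ‖m (X, Y) - X - Y‖ ≤ ε * max ‖X‖ ‖Y‖ ∧ ‖i X + X‖ ≤ ε * ‖X‖) :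
    ∃ r₀ : ℝ, 0 < r₀ ∧ r₀ ≤ R₁ ∧ ∀ r : ℝ, 0 < r → r ≤ r₀ →
      (((1 : G) ∈ ψ '' {X : E | ‖X‖ ≤ r} ∧
        (∀ a ∈ ψ '' {X : E | ‖X‖ ≤ r}, ∀ b ∈ ψ '' {X : E | ‖X‖ ≤ r},
          a * b ∈ ψ '' {X : E | ‖X‖ ≤ r}) ∧
        (∀ a ∈ ψ '' {X : E | ‖X‖ ≤ r}, a⁻¹ ∈ ψ '' {X : E | ‖X‖ ≤ r})) ∧
      (Topology.IsOpenEmbedding (Set.restrict {X : E | ‖X‖ ≤ R} ψ) →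
       (∀ r' : ℝ, 0 < r' → IsCompact {X : E | ‖X‖ ≤ r'} ∧ IsOpen {X : E | ‖X‖ ≤ r'}) →
       IsCompact (ψ '' {X : E | ‖X‖ ≤ r}) ∧ IsOpen (ψ '' {X : E | ‖X‖ ≤ r}))) :=
  stmt5_general hultra R ψ hψ0 m i R₁ hR₁ hR₁R hm hi happrox
end

section
/- Let X be a nonempty irreducible topological space whose topological Krull dimension is finite. Suppose X is partitioned into finitely many nonempty, pairwise disjoint, locally closed subsets O_1, …, O_k whose union is X, such that for each i the closure of O_i in X is a union of some of the sets O_1, …, O_k. If for some i the topological Krull dimension of O_i (with the subspace topology) equals the topological Krull dimension of X, then O_i is open in X. -/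
/-!
Every irreducible closed subset of a subspace `s` of an irreducible space `X` has closure
contained in `closure s`, and taking closures in `X` is strictly monotone. So if `s` is not
dense, every chain of irreducible closed subsets of `s` extends by `X` itself to a longer
chain in `X`, and `dim s + 1 ≤ dim X`. Hence a piece of full (finite) dimension is dense, and
a dense locally closed set is open.
-/

open Order TopologicalSpace Set

theorem Order.krullDim_add_one_le_of_strictMono_lt {α β : Type*} [Preorder α] [Preorder β]
    {f : α → β} (hf : StrictMono f) {b : β} (hb : ∀ a, f a < b) :
    krullDim α + 1 ≤ krullDim β := by
  cases isEmpty_or_nonempty α with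
  | inl _ => simp [krullDim_eq_bot_iff.mpr]
  | inr _ =>
    have hheight : (⨆ a : α, height a) + 1 ≤ height b := by
      rw [ENat.iSup_add]
      exact iSup_le fun a =>
        (add_le_add_left (height_le_height_apply_of_strictMono f hf a) 1).trans
          (height_add_one_le (hb a))
    rw [krullDim_eq_iSup_height_of_nonempty]
    exact (WithBot.coe_le_coe.mpr hheight).trans (height_le_krullDim b)

def TopologicalSpace.IrreducibleCloseds.univ (X : Type*) [TopologicalSpace X]
    [IrreducibleSpace X] : IrreducibleCloseds X :=
  ⟨Set.univ, IrreducibleSpace.isIrreducible_univ X, isClosed_univ⟩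

theorem topologicalKrullDim_add_one_le_of_closure_ne_univ {X : Type*} [TopologicalSpace X]
    [IrreducibleSpace X] {s : Set X} (hs : closure s ≠ univ) :
    topologicalKrullDim s + 1 ≤ topologicalKrullDim X := by
  refine krullDim_add_one_le_of_strictMono_lt
    (IrreducibleCloseds.map_strictMono_of_isInducing Topology.IsInducing.subtypeVal)
    (b := .univ X) fun A => lt_of_le_of_ne (fun _ _ => trivial) fun h => hs ?_
  have hA : closure (Subtype.val '' (A : Set s)) = univ := congrArg SetLike.coe h
  have hAs : closure (Subtype.val '' (A : Set s)) ⊆ closure s :=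
    closure_mono (image_subset_range _ _ |>.trans Subtype.range_coe.subset)
  exact eq_univ_of_univ_subset (hA ▸ hAs)

theorem ENat.WithBot.lt_add_one_of_ne_bot_of_lt_top {x : WithBot ℕ∞} (hbot : x ≠ ⊥)
    (htop : x < ⊤) : x < x + 1 := by
  induction x using WithBot.recBotCoe with
  | bot => exact absurd rfl hbot
  | coe e =>
    induction e using ENat.recTopCoe with
    | top => exact absurd htop (lt_irrefl _)
    | coe n => norm_cast; omega

theorem dense_of_topologicalKrullDim_eq {X : Type*} [TopologicalSpace X] [IrreducibleSpace X]
    (hfin : topologicalKrullDim X < ⊤) {s : Set X}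
    (hdim : topologicalKrullDim s = topologicalKrullDim X) : Dense s := by
  have : Nonempty (IrreducibleCloseds X) := ⟨.univ X⟩
  rw [dense_iff_closure_eq]
  by_contra hs
  have hle := topologicalKrullDim_add_one_le_of_closure_ne_univ hs
  rw [hdim] at hle
  exact hle.not_gt (ENat.WithBot.lt_add_one_of_ne_bot_of_lt_top bot_lt_krullDim.ne' hfin)

theorem IsLocallyClosed.isOpen_of_dense {X : Type*} [TopologicalSpace X] {s : Set X}
    (hs : IsLocallyClosed s) (hd : Dense s) : IsOpen s := by
  rwa [isLocallyClosed_iff_isOpen_coborder, coborder_eq_union_closure_compl, hd.closure_eq,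
    compl_univ, union_empty] at hs

theorem stmt6_general {X : Type*} [TopologicalSpace X] [IrreducibleSpace X]
    (hfin : topologicalKrullDim X < ⊤)
    {ι : Type*} (O : ι → Set X)
    (hlc : ∀ i, IsLocallyClosed (O i))
    (i : ι) (hdim : topologicalKrullDim ↥(O i) = topologicalKrullDim X) :
    IsOpen (O i) :=
  (hlc i).isOpen_of_dense (dense_of_topologicalKrullDim_eq hfin hdim)

/-- Topological content of Lemma 9.3 of the paper: let `X` be a nonempty irreducible
topological space of finite topological Krull dimension, partitioned into finitely many
nonempty pairwise disjoint locally closed pieces, the closure of each piece being a union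
of pieces.  If a piece has the same topological Krull dimension as `X`, it is open. -/
theorem stmt6 {X : Type*} [TopologicalSpace X] [IrreducibleSpace X]
    (hfin : topologicalKrullDim X < ⊤)
    {ι : Type*} [Finite ι] (O : ι → Set X)
    (hne : ∀ i, (O i).Nonempty)
    (hdisj : ∀ i j, i ≠ j → Disjoint (O i) (O j))
    (hcover : ⋃ i, O i = Set.univ)
    (hlc : ∀ i, IsLocallyClosed (O i))
    (hclosure : ∀ i, ∃ s : Set ι, closure (O i) = ⋃ j ∈ s, O j)
    (i : ι) (hdim : topologicalKrullDim ↥(O i) = topologicalKrullDim X) :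
    IsOpen (O i) :=
  stmt6_general hfin O hlc i hdim
end

section
/- Let X be a topological space and let 𝒪 be a finite, nonempty family of pairwise disjoint, nonempty, locally closed subsets of X such that the closure in X of each member of 𝒪 is a union of members of 𝒪. Then at least one member of 𝒪 is closed in X. -/
/-!
Among finitely many members choose one, `O`, whose closure is minimal. If `O` were not closed,
some point of `closure O \ O` would lie in a member `O'` contained in `closure O`, hence, by
disjointness, in `closure O \ O`. Local closedness of `O` makes `closure O \ O` closed, so
`closure O' ⊆ closure O \ O ⊊ closure O`, contradicting minimality.
-/

open Set

section

variable {X : Type*} [TopologicalSpace X]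

theorem IsLocallyClosed.isClosed_closure_diff {s : Set X} (hs : IsLocallyClosed s) :
    IsClosed (closure s \ s) :=
  isOpen_compl_iff.mp hs.isOpen_coborder

theorem IsLocallyClosed.closure_ssubset_of_subset_closure_diff {s t : Set X}
    (hs : IsLocallyClosed s) (hs₀ : s.Nonempty) (ht : t ⊆ closure s \ s) :
    closure t ⊂ closure s := by
  have hsub : closure t ⊆ closure s \ s := closure_minimal ht hs.isClosed_closure_diff
  refine ssubset_of_subset_not_subset (hsub.trans sdiff_subset) fun h => ?_
  obtain ⟨x, hx⟩ := hs₀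
  exact (hsub (h (subset_closure hx))).2 hx

theorem exists_mem_subset_closure_diff_of_not_isClosed {S : Set (Set X)} {O : Set X}
    (hO : ¬IsClosed O) (hS : closure O = ⋃₀ S) (hdisj : ∀ O' ∈ S, O' ≠ O → Disjoint O' O) :
    ∃ O' ∈ S, O' ⊆ closure O \ O := by
  obtain ⟨x, hx, hxO⟩ := sdiff_nonempty.mpr fun h => hO (closure_subset_iff_isClosed.mp h)
  obtain ⟨O', hO'S, hxO'⟩ := mem_sUnion.mp (hS ▸ hx)
  have hO'O : O' ≠ O := by rintro rfl; exact hxO hxO'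
  refine ⟨O', hO'S, fun y hy => ⟨hS ▸ mem_sUnion_of_mem hy hO'S, fun hyO => ?_⟩⟩
  exact disjoint_left.mp (hdisj O' hO'S hO'O) hy hyO

theorem isClosed_of_minimalFor_closure {𝒪 : Set (Set X)} {O : Set X}
    (hmin : MinimalFor (· ∈ 𝒪) closure O) (hlc : IsLocallyClosed O)
    (hdisj : ∀ O' ∈ 𝒪, O' ≠ O → Disjoint O' O) (hcl : ∃ S ⊆ 𝒪, closure O = ⋃₀ S) :
    IsClosed O := by
  by_contra hO
  obtain ⟨S, hS𝒪, hS⟩ := hcl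
  obtain ⟨O', hO'S, hO'⟩ :=
    exists_mem_subset_closure_diff_of_not_isClosed hO hS fun O' h => hdisj O' (hS𝒪 h)
  have hO₀ : O.Nonempty := nonempty_iff_ne_empty.mpr fun h => hO (h ▸ isClosed_empty)
  have hlt := hlc.closure_ssubset_of_subset_closure_diff hO₀ hO'
  exact hlt.not_subset (hmin.2 (hS𝒪 hO'S) hlt.subset)

end

theorem stmt7_general {X : Type*} [TopologicalSpace X] (𝒪 : Finset (Set X)) (h𝒪 : 𝒪.Nonempty)
    (hdisj : ∀ O ∈ 𝒪, ∀ O' ∈ 𝒪, O ≠ O' → Disjoint O O')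
    (hlc : ∀ O ∈ 𝒪, IsLocallyClosed O)
    (hcl : ∀ O ∈ 𝒪, ∃ S ⊆ 𝒪, closure O = ⋃ O' ∈ S, (O' : Set X)) :
    ∃ O ∈ 𝒪, IsClosed O := by
  obtain ⟨O, hmin⟩ := 𝒪.exists_minimalFor closure h𝒪
  obtain ⟨S, hS𝒪, hS⟩ := hcl O hmin.1
  refine ⟨O, hmin.1, isClosed_of_minimalFor_closure (𝒪 := ↑𝒪) hmin (hlc O hmin.1)
    (fun O' hO' => hdisj O' hO' O hmin.1) ⟨↑S, Finset.coe_subset.mpr hS𝒪, ?_⟩⟩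
  rw [hS, sUnion_eq_biUnion]
  rfl

/-- Topological content of Lemma 9.2 (ii) of the paper (existence of a closed orbit):
a finite nonempty family of pairwise disjoint nonempty locally closed subsets of a
topological space, such that the closure of each member is a union of members,
contains a closed member. -/
theorem stmt7 {X : Type*} [TopologicalSpace X] (𝒪 : Finset (Set X)) (h𝒪 : 𝒪.Nonempty)
    (hne : ∀ O ∈ 𝒪, O.Nonempty)
    (hdisj : ∀ O ∈ 𝒪, ∀ O' ∈ 𝒪, O ≠ O' → Disjoint O O')
    (hlc : ∀ O ∈ 𝒪, IsLocallyClosed O)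
    (hcl : ∀ O ∈ 𝒪, ∃ S ⊆ 𝒪, closure O = ⋃ O' ∈ S, (O' : Set X)) :
    ∃ O ∈ 𝒪, IsClosed O :=
  stmt7_general 𝒪 h𝒪 hdisj hlc hcl
end
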